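/- arXiv:2510.19744 — 2 statements merged into one kernel-verified Lean document; each statement's English description precedes it below -/
import Mathlib

section
/- Let A be an infinite Boolean algebra and I an ideal in A. Then I has the Nikodym property (every sequence of bounded finitely additive measures on I converging pointwise to 0 on I is uniformly norm bounded) if and only if the Boolean algebra A⟨I⟩ = I ∪ I* has the Nikodym property (every sequence in ba(A⟨I⟩) converging pointwise to 0 on A⟨I⟩ is norm bounded). -/
open Filter
open scoped ENNReal

variable {α : Type*}

/-- Finite additivity of a real-valued set function on a Boolean algebra. -/
def FinAdd [BooleanAlgebra α] (μ : α → ℝ) : Prop :=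
  ∀ a b : α, a ⊓ b = ⊥ → μ (a ⊔ b) = μ a + μ b

/-- The variation of `μ` over the subfamily `s`:
`sup {|μ a| + |μ b| : a, b ∈ s, a ⊓ b = ⊥}`, computed in `ℝ≥0∞`. -/
noncomputable def svar [BooleanAlgebra α] (μ : α → ℝ) (s : Set α) : ℝ≥0∞ :=
  ⨆ p : {p : α × α // p.1 ∈ s ∧ p.2 ∈ s ∧ p.1 ⊓ p.2 = ⊥},
    ENNReal.ofReal (|μ p.1.1| + |μ p.1.2|)

/-- The variation norm of the restriction `μ ↾ a`, i.e. `|μ|(a)`. -/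
noncomputable def bvar [BooleanAlgebra α] (μ : α → ℝ) (a : α) : ℝ≥0∞ :=
  svar μ (Set.Iic a)

/-- `t` is an ultrafilter on the Boolean algebra `α`. -/
structure IsUltrafilterSet [BooleanAlgebra α] (t : Set α) : Prop where
  top_mem : ⊤ ∈ t
  bot_not_mem : ⊥ ∉ t
  mem_of_le : ∀ ⦃a b : α⦄, a ∈ t → a ≤ b → b ∈ t
  inf_mem : ∀ ⦃a b : α⦄, a ∈ t → b ∈ t → a ⊓ b ∈ t
/-- Finite additivity on the subfamily `s`. -/
def FinAddOn [BooleanAlgebra α] (s : Set α) (μ : α → ℝ) : Prop :=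
  ∀ a b : α, a ∈ s → b ∈ s → a ⊓ b = ⊥ → μ (a ⊔ b) = μ a + μ b

/-- The subalgebra `A⟨I⟩ = I ∪ I*` of `α` generated by the ideal `I`. -/
def genSet [BooleanAlgebra α] (I : Order.Ideal α) : Set α := {a : α | a ∈ I ∨ aᶜ ∈ I}

open Classical in
/-- The extension `T_c(μ)` of a measure `μ ∈ ba(I)` to `A⟨I⟩`:
`T_c(μ)(a) = μ(a)` if `a ∈ I`, and `T_c(μ)(a) = -μ(aᶜ) + c` otherwise. -/
noncomputable def extMap [BooleanAlgebra α] (I : Order.Ideal α) (μ : α → ℝ) (c : ℝ) :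
    α → ℝ :=
  fun a => if a ∈ I then μ a else -μ aᶜ + c
/-- The Nikodym property for measures on the subfamily `s` of a Boolean algebra:
every sequence of bounded finitely additive measures on `s` converging pointwise to `0`
on `s` is uniformly norm bounded. -/
def NikodymOn [BooleanAlgebra α] (s : Set α) : Prop :=
  ∀ μ : ℕ → α → ℝ, (∀ n, FinAddOn s (μ n)) → (∀ n, svar (μ n) s ≠ ⊤) →
    (∀ a ∈ s, Tendsto (fun n => μ n a) atTop (nhds 0)) →
    (⨆ n, svar (μ n) s) ≠ ⊤

/-! Extending `μ ∈ ba(I)` by `a ↦ -μ aᶜ` off `I` is finitely additive and at most doubles the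
norm, so a pointwise null, unbounded sequence on `I` extends to one on `A⟨I⟩`. Conversely, on
`A⟨I⟩` every `a ∉ I` satisfies `ν a = ν ⊤ - ν aᶜ` with `aᶜ ∈ I`, and `ν n ⊤ → 0` is bounded, so
the norm on `A⟨I⟩` is controlled by the norm on `I`. -/

section Variation

variable [BooleanAlgebra α] {μ ν : α → ℝ} {s t : Set α}

lemma svar_le_svar_of_subset (hst : s ⊆ t) (h : Set.EqOn μ ν s) : svar μ s ≤ svar ν t :=
  iSup_le fun ⟨⟨a, b⟩, ha, hb, hab⟩ => by
    rw [show ENNReal.ofReal (|μ a| + |μ b|) = ENNReal.ofReal (|ν a| + |ν b|) by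
      rw [h ha, h hb]]
    exact le_iSup (fun p : {p : α × α // p.1 ∈ t ∧ p.2 ∈ t ∧ p.1 ⊓ p.2 = ⊥} =>
      ENNReal.ofReal (|ν p.1.1| + |ν p.1.2|)) ⟨⟨a, b⟩, hst ha, hst hb, hab⟩

lemma ofReal_abs_le_svar {a : α} (ha : a ∈ s) (hbot : ⊥ ∈ s) :
    ENNReal.ofReal |μ a| ≤ svar μ s :=
  calc ENNReal.ofReal |μ a| ≤ ENNReal.ofReal (|μ a| + |μ ⊥|) :=
        ENNReal.ofReal_le_ofReal (le_add_of_nonneg_right (abs_nonneg _))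
    _ ≤ svar μ s := le_iSup (fun p : {p : α × α // p.1 ∈ s ∧ p.2 ∈ s ∧ p.1 ⊓ p.2 = ⊥} =>
        ENNReal.ofReal (|μ p.1.1| + |μ p.1.2|)) ⟨⟨a, ⊥⟩, ha, hbot, inf_bot_eq a⟩

lemma svar_le_two_mul {C : ℝ≥0∞} (h : ∀ a ∈ s, ENNReal.ofReal |μ a| ≤ C) :
    svar μ s ≤ 2 * C :=
  iSup_le fun ⟨⟨a, b⟩, ha, hb, _⟩ =>
    calc ENNReal.ofReal (|μ a| + |μ b|) ≤ ENNReal.ofReal |μ a| + ENNReal.ofReal |μ b| :=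
          ENNReal.ofReal_add_le
      _ ≤ 2 * C := by rw [two_mul]; exact add_le_add (h a ha) (h b hb)

lemma FinAddOn.apply_eq_add_sdiff (hs : IsLowerSet s) (hμ : FinAddOn s μ) {a x : α}
    (hx : x ∈ s) (hax : a ≤ x) : μ x = μ a + μ (x \ a) := by
  have h := hμ a (x \ a) (hs hax hx) (hs sdiff_le hx) inf_sdiff_self_right
  rwa [sup_sdiff_cancel_right hax] at h

end Variation

section Ideal

variable [BooleanAlgebra α] {I : Order.Ideal α} {μ ν : α → ℝ} {a : α}

lemma subset_genSet : (I : Set α) ⊆ genSet I := fun _ => Or.inl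

lemma top_mem_genSet : (⊤ : α) ∈ genSet I := Or.inr (by rw [compl_top]; exact I.bot_mem)

lemma extMap_of_mem (c : ℝ) (ha : a ∈ I) : extMap I μ c a = μ a := if_pos ha

lemma extMap_of_not_mem (c : ℝ) (ha : a ∉ I) : extMap I μ c a = -μ aᶜ + c := if_neg ha

lemma extMap_sup_of_mem_of_not_mem (hμ : FinAddOn (I : Set α) μ) (c : ℝ) {a b : α}
    (ha : a ∈ I) (hb : b ∈ genSet I) (hbI : b ∉ I) (hab : a ⊓ b = ⊥) :
    extMap I μ c (a ⊔ b) = extMap I μ c a + extMap I μ c b := by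
  have hbc : bᶜ ∈ I := hb.resolve_left hbI
  have hsup : a ⊔ b ∉ I := fun h => hbI (I.lower le_sup_right h)
  have hcompl : (a ⊔ b)ᶜ = bᶜ \ a := by rw [compl_sup, sdiff_eq, inf_comm]
  have hsplit := hμ.apply_eq_add_sdiff I.lower hbc
    (le_compl_iff_disjoint_right.2 (disjoint_iff.2 hab))
  rw [extMap_of_not_mem c hsup, extMap_of_mem c ha, extMap_of_not_mem c hbI, hcompl]
  linarith

lemma FinAddOn.extMap (hμ : FinAddOn (I : Set α) μ) (c : ℝ) :
    FinAddOn (genSet I) (extMap I μ c) := by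
  intro a b ha hb hab
  by_cases haI : a ∈ I <;> by_cases hbI : b ∈ I
  · rw [extMap_of_mem c haI, extMap_of_mem c hbI, extMap_of_mem c (I.sup_mem haI hbI)]
    exact hμ a b haI hbI hab
  · exact extMap_sup_of_mem_of_not_mem hμ c haI hb hbI hab
  · rw [sup_comm, add_comm]
    exact extMap_sup_of_mem_of_not_mem hμ c hbI ha haI (by rwa [inf_comm])
  · exact absurd (I.lower (le_compl_iff_disjoint_right.2 (disjoint_iff.2 hab))
      (hb.resolve_left hbI)) haI

lemma svar_le_svar_extMap (c : ℝ) : svar μ I ≤ svar (extMap I μ c) (genSet I) :=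
  svar_le_svar_of_subset subset_genSet fun _ ha => (extMap_of_mem c ha).symm

lemma svar_extMap_zero_le : svar (extMap I μ 0) (genSet I) ≤ 2 * svar μ I := by
  refine svar_le_two_mul fun a ha => ?_
  by_cases haI : a ∈ I
  · rw [extMap_of_mem 0 haI]
    exact ofReal_abs_le_svar haI I.bot_mem
  · rw [extMap_of_not_mem 0 haI, add_zero, abs_neg]
    exact ofReal_abs_le_svar (ha.resolve_left haI) I.bot_mem

lemma ofReal_abs_le_of_mem_genSet (hν : FinAddOn (genSet I) ν) (ha : a ∈ genSet I) :
    ENNReal.ofReal |ν a| ≤ ENNReal.ofReal |ν ⊤| + svar ν I := by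
  rcases ha with haI | hac
  · exact (ofReal_abs_le_svar haI I.bot_mem).trans le_add_self
  · have htop : ν ⊤ = ν a + ν aᶜ := by
      rw [← hν a aᶜ (Or.inr hac) (Or.inl hac) inf_compl_eq_bot, sup_compl_eq_top]
    calc ENNReal.ofReal |ν a| = ENNReal.ofReal |ν ⊤ - ν aᶜ| := by
          rw [htop, add_sub_cancel_right]
      _ ≤ ENNReal.ofReal (|ν ⊤| + |ν aᶜ|) := ENNReal.ofReal_le_ofReal (abs_sub _ _)
      _ ≤ ENNReal.ofReal |ν ⊤| + ENNReal.ofReal |ν aᶜ| := ENNReal.ofReal_add_le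
      _ ≤ ENNReal.ofReal |ν ⊤| + svar ν I := by
          gcongr; exact ofReal_abs_le_svar hac I.bot_mem

theorem nikodymOn_of_nikodymOn_genSet (h : NikodymOn (genSet I)) : NikodymOn (I : Set α) := by
  intro μ hadd hfin htend
  have htend' : ∀ a ∈ genSet I, Tendsto (fun n => extMap I (μ n) 0 a) atTop (nhds 0) := by
    intro a ha
    by_cases haI : a ∈ I
    · simpa only [extMap_of_mem 0 haI] using htend a haI
    · simpa only [extMap_of_not_mem 0 haI, add_zero, neg_zero] using
        (htend aᶜ (ha.resolve_left haI)).neg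
  have hbdd := h (fun n => extMap I (μ n) 0) (fun n => (hadd n).extMap 0)
    (fun n => ne_top_of_le_ne_top (ENNReal.mul_ne_top ENNReal.ofNat_ne_top (hfin n))
      svar_extMap_zero_le) htend'
  exact ne_top_of_le_ne_top hbdd (iSup_mono fun n => svar_le_svar_extMap 0)

theorem nikodymOn_genSet_of_nikodymOn (h : NikodymOn (I : Set α)) : NikodymOn (genSet I) := by
  intro ν hadd hfin htend
  have haddI : ∀ n, FinAddOn (I : Set α) (ν n) := fun n a b ha hb =>
    hadd n a b (subset_genSet ha) (subset_genSet hb)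
  have hbddI := h ν haddI
    (fun n => ne_top_of_le_ne_top (hfin n) (svar_le_svar_of_subset subset_genSet fun _ _ => rfl))
    (fun a ha => htend a (subset_genSet ha))
  obtain ⟨M, hM⟩ := (htend ⊤ top_mem_genSet).abs.bddAbove_range
  have hbound : ∀ n, svar (ν n) (genSet I) ≤
      2 * (ENNReal.ofReal M + ⨆ m, svar (ν m) (I : Set α)) := fun n =>
    svar_le_two_mul fun a ha =>
      (ofReal_abs_le_of_mem_genSet (hadd n) ha).trans <| by
        gcongr
        · exact hM (Set.mem_range_self n)
        · exact le_iSup (fun m => svar (ν m) (I : Set α)) n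
  exact ne_top_of_le_ne_top (ENNReal.mul_ne_top ENNReal.ofNat_ne_top
    (ENNReal.add_ne_top.2 ⟨ENNReal.ofReal_ne_top, hbddI⟩)) (iSup_le hbound)

end Ideal

theorem stmt_8_general [BooleanAlgebra α] (I : Order.Ideal α) :
    NikodymOn (I : Set α) ↔ NikodymOn (genSet I) :=
  ⟨nikodymOn_genSet_of_nikodymOn, nikodymOn_of_nikodymOn_genSet⟩

/-- An ideal `I` in an infinite Boolean algebra has the Nikodym property if and only if
the generated subalgebra `A⟨I⟩ = I ∪ I*` has the Nikodym property. -/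
theorem stmt_8 [BooleanAlgebra α] [Infinite α] (I : Order.Ideal α) :
    NikodymOn (I : Set α) ↔ NikodymOn (genSet I) :=
  stmt_8_general I
end

section
/- Let I be an ideal in a Boolean algebra A, and let μ ∈ ba(A⟨I⟩) and ν ∈ ba(I) be such that μ extends ν (μ ↾ I = ν). Then ‖μ‖ = ‖ν‖ + |μ̂({p})|, where μ̂ is the Radon extension of μ to the Stone space of A⟨I⟩ and p is the point of the Stone space corresponding to the ultrafilter I* of A⟨I⟩. -/
open Filter
open scoped ENNReal

variable {α : Type*}

open MeasureTheory

/-- A representation of the Boolean algebra `α` by the clopen subsets of its Stone space `S`. -/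
structure StoneRep (α S : Type*) [BooleanAlgebra α] [TopologicalSpace S] where
  e : α → Set S
  isClopen : ∀ a, IsClopen (e a)
  map_bot : e ⊥ = ∅
  map_top : e ⊤ = Set.univ
  map_sup : ∀ a b, e (a ⊔ b) = e a ∪ e b
  map_inf : ∀ a b, e (a ⊓ b) = e a ∩ e b
  map_compl : ∀ a, e aᶜ = (e a)ᶜ
  injective : Function.Injective e
  surj_clopen : ∀ U : Set S, IsClopen U → ∃ a, e a = U

/-!
Outer regularity of `|μ̂|` and zero-dimensionality of `S` give clopen neighbourhoods `R.e c` of `p`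
(so `cᶜ ∈ I`) with `|μ̂|(R.e c)` arbitrarily close to `|μ̂|({p}) = |μ̂ {p}|`. Cutting a disjoint pair
`a, b` along `c`, the pieces below `cᶜ` lie in `I` and the pieces below `c` are bounded by
`|μ̂|(R.e c)`; this gives `‖μ‖ ≤ ‖ν‖ + |μ̂ {p}|`. Conversely, for a disjoint pair `a, b ∈ I` the
image of `c ⊓ (a ⊔ b)ᶜ` still contains `p`, so its `μ`-value is close to `μ̂ {p}`. Of three reals two
have the same sign, so two of the three disjoint elements `a, b, c ⊓ (a ⊔ b)ᶜ` can be merged into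
one; hence `|μ a| + |μ b| + |μ̂ {p}| ≤ ‖μ‖`.
-/

theorem abs_add_of_mul_nonneg {u v : ℝ} (h : 0 ≤ u * v) : |u + v| = |u| + |v| := by
  rcases mul_nonneg_iff.mp h with ⟨hu, hv⟩ | ⟨hu, hv⟩
  · rw [abs_of_nonneg (add_nonneg hu hv), abs_of_nonneg hu, abs_of_nonneg hv]
  · rw [abs_of_nonpos (add_nonpos hu hv), abs_of_nonpos hu, abs_of_nonpos hv, neg_add]

theorem mul_nonneg_or_mul_nonneg_or_mul_nonneg (u v w : ℝ) :
    0 ≤ u * v ∨ 0 ≤ u * w ∨ 0 ≤ v * w := by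
  by_contra! h
  obtain ⟨huv, huw, hvw⟩ := h
  -- the product of the three products is the square `(u * v * w) ^ 2`
  nlinarith [sq_nonneg (u * v * w), mul_pos_of_neg_of_neg huv huw]

section Variation

variable [BooleanAlgebra α] {μ : α → ℝ} {s t : Set α} {a b c : α}

theorem ofReal_le_svar (ha : a ∈ s) (hb : b ∈ s) (hab : a ⊓ b = ⊥) :
    ENNReal.ofReal (|μ a| + |μ b|) ≤ svar μ s :=
  le_iSup_of_le ⟨(a, b), ha, hb, hab⟩ le_rfl

theorem abs_add_abs_le_toReal_svar (hs : svar μ s ≠ ⊤) (ha : a ∈ s) (hb : b ∈ s)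
    (hab : a ⊓ b = ⊥) : |μ a| + |μ b| ≤ (svar μ s).toReal :=
  (ENNReal.ofReal_le_iff_le_toReal hs).mp (ofReal_le_svar ha hb hab)

theorem svar_le_ofReal {r : ℝ} (h : ∀ a ∈ s, ∀ b ∈ s, a ⊓ b = ⊥ → |μ a| + |μ b| ≤ r) :
    svar μ s ≤ ENNReal.ofReal r :=
  iSup_le fun q => ENNReal.ofReal_le_ofReal (h _ q.2.1 _ q.2.2.1 q.2.2.2)

theorem svar_mono (h : s ⊆ t) : svar μ s ≤ svar μ t :=
  iSup_le fun q => ofReal_le_svar (h q.2.1) (h q.2.2.1) q.2.2.2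

theorem FinAdd.apply_eq_inf_add_inf_compl (hμ : FinAdd μ) (a c : α) :
    μ a = μ (a ⊓ c) + μ (a ⊓ cᶜ) := by
  rw [← hμ _ _ (by rw [inf_inf_inf_comm, inf_compl_eq_bot, inf_bot_eq]), ← inf_sup_left,
    sup_compl_eq_top, inf_top_eq]

theorem FinAdd.abs_add_abs_add_abs_le (hμ : FinAdd μ) {B : ℝ}
    (hB : ∀ a b : α, a ⊓ b = ⊥ → |μ a| + |μ b| ≤ B)
    (hab : a ⊓ b = ⊥) (hac : a ⊓ c = ⊥) (hbc : b ⊓ c = ⊥) :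
    |μ a| + |μ b| + |μ c| ≤ B := by
  rcases mul_nonneg_or_mul_nonneg_or_mul_nonneg (μ a) (μ b) (μ c) with h | h | h
  · have := hB (a ⊔ b) c (by rw [inf_sup_right, hac, hbc, sup_idem])
    rwa [hμ a b hab, abs_add_of_mul_nonneg h] at this
  · have := hB (a ⊔ c) b (by rw [inf_sup_right, hab, inf_comm, hbc, sup_idem])
    rw [hμ a c hac, abs_add_of_mul_nonneg h] at this
    linarith
  · have := hB a (b ⊔ c) (by rw [inf_sup_left, hab, hac, sup_idem])
    rw [hμ b c hbc, abs_add_of_mul_nonneg h] at this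
    linarith

end Variation

namespace MeasureTheory.SignedMeasure

variable {X : Type*} [MeasurableSpace X] (s : SignedMeasure X)

theorem totalVariation_real_singleton [MeasurableSingletonClass X] (x : X) :
    s.totalVariation.real {x} = |s {x}| := by
  obtain ⟨t, -, hpos, hneg⟩ := s.toJordanDecomposition.mutuallySingular
  rw [s.apply_eq_posPart_real_sub_negPart_real (measurableSet_singleton x), totalVariation,
    measureReal_add_apply]
  by_cases hx : x ∈ t
  · rw [(measureReal_eq_zero_iff).mpr (measure_mono_null (Set.singleton_subset_iff.mpr hx) hpos),
      zero_add, zero_sub, abs_neg, abs_of_nonneg measureReal_nonneg]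
  · rw [(measureReal_eq_zero_iff).mpr (measure_mono_null (Set.singleton_subset_iff.mpr hx) hneg),
      add_zero, sub_zero, abs_of_nonneg measureReal_nonneg]

theorem abs_add_abs_le_totalVariation_real_union {E F : Set X} (hEF : Disjoint E F)
    (hF : MeasurableSet F) : |s E| + |s F| ≤ s.totalVariation.real (E ∪ F) := by
  rw [measureReal_union hEF hF]
  exact add_le_add (s.norm_le_totalVariation E) (s.norm_le_totalVariation F)

theorem abs_sub_apply_singleton_le [MeasurableSingletonClass X] {E : Set X} {x : X}
    (hE : MeasurableSet E) (hx : x ∈ E) :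
    |s E - s {x}| ≤ s.totalVariation.real E - s.totalVariation.real {x} := by
  have hsub : {x} ⊆ E := Set.singleton_subset_iff.mpr hx
  rw [← VectorMeasure.of_sdiff (measurableSet_singleton x) hE hsub,
    ← measureReal_sdiff hsub (measurableSet_singleton x)]
  exact s.norm_le_totalVariation _

end MeasureTheory.SignedMeasure

namespace StoneRep

variable {S : Type*} [BooleanAlgebra α] [TopologicalSpace S] (R : StoneRep α S)

theorem monotone_e : Monotone R.e := fun a b hab => by
  rw [← inf_eq_left.mpr hab, R.map_inf]
  exact Set.inter_subset_right

theorem disjoint_e {a b : α} (hab : a ⊓ b = ⊥) : Disjoint (R.e a) (R.e b) := by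
  rw [Set.disjoint_iff_inter_eq_empty, ← R.map_inf, hab, R.map_bot]

theorem measurableSet_e [MeasurableSpace S] [OpensMeasurableSpace S] (a : α) :
    MeasurableSet (R.e a) :=
  (R.isClopen a).isOpen.measurableSet

theorem exists_mem_measureReal_lt_add [CompactSpace S] [T2Space S] [TotallyDisconnectedSpace S]
    [MeasurableSpace S] (ν : Measure S) [IsFiniteMeasure ν] [ν.OuterRegular] (x : S) {ε : ℝ}
    (hε : 0 < ε) : ∃ a, x ∈ R.e a ∧ ν.real (R.e a) < ν.real {x} + ε := by
  obtain ⟨U, hxU, hUo, hU⟩ :=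
    Set.exists_isOpen_lt_add {x} (measure_ne_top ν _) (ENNReal.ofReal_pos.mpr hε).ne'
  obtain ⟨V, hV, hxV, hVU⟩ := compact_exists_isClopen_in_isOpen hUo (hxU rfl)
  obtain ⟨a, rfl⟩ := R.surj_clopen V hV
  refine ⟨a, hxV, ENNReal.toReal_lt_of_lt_ofReal ?_⟩
  rw [ENNReal.ofReal_add measureReal_nonneg hε.le, ofReal_measureReal]
  exact (measure_mono hVU).trans_lt hU

end StoneRep

section Decomposition

variable [BooleanAlgebra α] {S : Type*} [TopologicalSpace S] [CompactSpace S] [T2Space S]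
  [TotallyDisconnectedSpace S] [MeasurableSpace S] [BorelSpace S] {I : Order.Ideal α}
  {R : StoneRep α S} {μ : α → ℝ} {μhat : SignedMeasure S} [μhat.totalVariation.OuterRegular]
  {p : S} {a b : α}

theorem abs_add_abs_le_toReal_svar_add (hadd : FinAdd μ) (hext : ∀ a, μhat (R.e a) = μ a)
    (hp : ∀ a : α, p ∈ R.e a ↔ aᶜ ∈ I) (hI : svar μ (I : Set α) ≠ ⊤) (hab : a ⊓ b = ⊥) :
    |μ a| + |μ b| ≤ (svar μ (I : Set α)).toReal + |μhat {p}| := by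
  refine le_of_forall_pos_lt_add fun ε hε => ?_
  obtain ⟨c, hpc, hc⟩ := R.exists_mem_measureReal_lt_add μhat.totalVariation p hε
  rw [μhat.totalVariation_real_singleton] at hc
  have hcI : cᶜ ∈ I := (hp c).mp hpc
  have hinf (d : α) : a ⊓ d ⊓ (b ⊓ d) = ⊥ := by rw [← inf_inf_distrib_right, hab, bot_inf_eq]
  have hout : |μ (a ⊓ cᶜ)| + |μ (b ⊓ cᶜ)| ≤ (svar μ (I : Set α)).toReal :=
    abs_add_abs_le_toReal_svar hI (I.lower inf_le_right hcI) (I.lower inf_le_right hcI) (hinf cᶜ)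
  have hin : |μ (a ⊓ c)| + |μ (b ⊓ c)| ≤ μhat.totalVariation.real (R.e c) := by
    rw [← hext, ← hext]
    exact (μhat.abs_add_abs_le_totalVariation_real_union (R.disjoint_e (hinf c))
      (R.measurableSet_e _)).trans
      (measureReal_mono (Set.union_subset (R.monotone_e inf_le_right) (R.monotone_e inf_le_right)))
  have hsplit_a := abs_add_le (μ (a ⊓ c)) (μ (a ⊓ cᶜ))
  have hsplit_b := abs_add_le (μ (b ⊓ c)) (μ (b ⊓ cᶜ))
  rw [← hadd.apply_eq_inf_add_inf_compl] at hsplit_a hsplit_b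
  linarith

theorem abs_add_abs_add_abs_le_toReal_bvar (hadd : FinAdd μ) (hext : ∀ a, μhat (R.e a) = μ a)
    (hp : ∀ a : α, p ∈ R.e a ↔ aᶜ ∈ I) (hbdd : bvar μ ⊤ ≠ ⊤) (ha : a ∈ I) (hb : b ∈ I)
    (hab : a ⊓ b = ⊥) : |μ a| + |μ b| + |μhat {p}| ≤ (bvar μ ⊤).toReal := by
  refine le_of_forall_pos_lt_add fun ε hε => ?_
  obtain ⟨c, hpc, hc⟩ := R.exists_mem_measureReal_lt_add μhat.totalVariation p hε
  set d := c ⊓ (a ⊔ b)ᶜ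
  have hpd : p ∈ R.e d :=
    (hp d).mpr (by rw [compl_inf, compl_compl]; exact I.sup_mem ((hp c).mp hpc) (I.sup_mem ha hb))
  have hd : |μ d - μhat {p}| < ε :=
    calc |μ d - μhat {p}| = |μhat (R.e d) - μhat {p}| := by rw [hext]
      _ ≤ μhat.totalVariation.real (R.e d) - μhat.totalVariation.real {p} :=
        μhat.abs_sub_apply_singleton_le (R.measurableSet_e d) hpd
      _ ≤ μhat.totalVariation.real (R.e c) - μhat.totalVariation.real {p} :=
        sub_le_sub_right (measureReal_mono (R.monotone_e inf_le_left)) _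
      _ < ε := by linarith
  have hdisj {e : α} (he : e ≤ a ⊔ b) : e ⊓ d = ⊥ :=
    (disjoint_compl_right.mono he inf_le_right).eq_bot
  have hpair (a b : α) (h : a ⊓ b = ⊥) : |μ a| + |μ b| ≤ (bvar μ ⊤).toReal :=
    abs_add_abs_le_toReal_svar hbdd le_top le_top h
  have h3 := hadd.abs_add_abs_add_abs_le hpair hab
    (hdisj le_sup_left) (hdisj le_sup_right)
  have := abs_sub_abs_le_abs_sub (μhat {p}) (μ d)
  rw [abs_sub_comm] at this
  linarith

end Decomposition

theorem stmt_19_general {α S : Type*} [BooleanAlgebra α] [TopologicalSpace S] [CompactSpace S]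
    [T2Space S] [TotallyDisconnectedSpace S] [MeasurableSpace S] [BorelSpace S]
    (I : Order.Ideal α)
    (R : StoneRep α S)
    (μ : α → ℝ) (hadd : FinAdd μ) (hbdd : bvar μ ⊤ ≠ ⊤)
    (μhat : MeasureTheory.SignedMeasure S)
    (hext : ∀ a, μhat (R.e a) = μ a)
    (hreg : μhat.totalVariation.Regular)
    (p : S) (hp : ∀ a : α, p ∈ R.e a ↔ aᶜ ∈ I) :
    bvar μ ⊤ = svar μ (I : Set α) + ENNReal.ofReal |μhat {p}| := by
  have := hreg.toOuterRegular
  have hI : svar μ (I : Set α) ≠ ⊤ := ne_top_of_le_ne_top hbdd (svar_mono fun _ _ => le_top)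
  have hx : |μhat {p}| ≤ (bvar μ ⊤).toReal := by
    have := abs_add_abs_add_abs_le_toReal_bvar hadd hext hp hbdd I.bot_mem I.bot_mem (inf_bot_eq ⊥)
    linarith [abs_nonneg (μ ⊥)]
  apply le_antisymm
  · calc bvar μ ⊤ ≤ ENNReal.ofReal ((svar μ (I : Set α)).toReal + |μhat {p}|) :=
          svar_le_ofReal fun a _ b _ hab => abs_add_abs_le_toReal_svar_add hadd hext hp hI hab
      _ = _ := by rw [ENNReal.ofReal_add ENNReal.toReal_nonneg (abs_nonneg _),
          ENNReal.ofReal_toReal hI]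
  · calc svar μ (I : Set α) + ENNReal.ofReal |μhat {p}|
        ≤ ENNReal.ofReal ((bvar μ ⊤).toReal - |μhat {p}|) + ENNReal.ofReal |μhat {p}| := by
          gcongr
          refine svar_le_ofReal fun a ha b hb hab => ?_
          linarith [abs_add_abs_add_abs_le_toReal_bvar hadd hext hp hbdd ha hb hab]
      _ = bvar μ ⊤ := by
          rw [← ENNReal.ofReal_add (sub_nonneg.mpr hx) (abs_nonneg _), sub_add_cancel,
            ENNReal.ofReal_toReal hbdd]

/-- Decomposition of the norm of a measure `μ ∈ ba(A⟨I⟩)` extending `ν = μ ↾ I`: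
`‖μ‖ = ‖ν‖ + |μ̂({p})|`, where `p` is the point of the Stone space of `A⟨I⟩`
corresponding to the ultrafilter `I*`.  Here the Boolean algebra `α` plays the role of
`A⟨I⟩`, i.e. `I` is an ideal in `α` with `a ∈ I` or `aᶜ ∈ I` for every `a`. -/
theorem stmt_19 {α S : Type*} [BooleanAlgebra α] [TopologicalSpace S] [CompactSpace S]
    [T2Space S] [TotallyDisconnectedSpace S] [MeasurableSpace S] [BorelSpace S]
    (I : Order.Ideal α) (hgen : ∀ a : α, a ∈ I ∨ aᶜ ∈ I)
    (R : StoneRep α S)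
    (μ : α → ℝ) (hadd : FinAdd μ) (hbdd : bvar μ ⊤ ≠ ⊤)
    (μhat : MeasureTheory.SignedMeasure S)
    (hext : ∀ a, μhat (R.e a) = μ a)
    (hreg : μhat.totalVariation.Regular)
    (p : S) (hp : ∀ a : α, p ∈ R.e a ↔ aᶜ ∈ I) :
    bvar μ ⊤ = svar μ (I : Set α) + ENNReal.ofReal |μhat {p}| :=
  stmt_19_general I R μ hadd hbdd μhat hext hreg p hp
end
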